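/- (Theorem 1, correctness of the gate-count optimal construction.) Let n ≥ 2 and θ : {0,1}^n → ℝ with Walsh coefficients α_j and β_j = α_j/2^{(n−2)/2}. Let G_1 = R_Z(−β_{10^{(n−1)}}; 1), and for 2 ≤ p ≤ n let G_p be the matrix obtained by applying, in order, R_Z(−β_{j^{(1)}};p), CNOT(cc_set(p)(1),p), R_Z(−β_{j^{(2)}};p), CNOT(cc_set(p)(2),p), …, R_Z(−β_{j^{(2^{p−1})}};p), CNOT(cc_set(p)(2^{p−1}),p), where j^{(i)} is the n-bit string whose first p−1 bits are GC_{2^{p−1}}(i), whose p-th bit is 1, and whose remaining bits are 0. Then the product G_1 · G_2 ··· G_n equals e^{−i θ̄} · D(θ), where θ̄ = 2^{−n} Σ_{k ∈ {0,1}^n} θ_k (so the construction realizes D(θ) up to the global phase e^{−i θ̄}). -/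

import Mathlib

open scoped BigOperators

/-- The CNOT gate with control `c` and target `t` (the index `i : Fin n` stands for
qubit number `i+1 ∈ {1,…,n}`). -/
noncomputable def CNOT (n : ℕ) (c t : Fin n) :
    Matrix (Fin n → Bool) (Fin n → Bool) ℂ :=
  fun k' k => if k' = Function.update k t (xor (k t) (k c)) then 1 else 0

/-- The gate `R_Z(−β; r)`: diagonal with `(k,k)` entry `exp(i β (−1)^{k_r} / 2)`. -/
noncomputable def RZ (n : ℕ) (β : ℝ) (r : Fin n) :
    Matrix (Fin n → Bool) (Fin n → Bool) ℂ :=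
  Matrix.diagonal fun k => Complex.exp (Complex.I *
    Complex.ofReal (β * (if k r then -1 else 1) / 2))

/-- The real sign `(−1)^{j·k}`. -/
noncomputable def sgn (n : ℕ) (j k : Fin n → Bool) : ℝ :=
  (-1 : ℝ) ^ (Finset.univ.filter fun i : Fin n => (j i && k i) = true).card

/-- The diagonal matrix `D(θ)` whose `(k,k)` entry is `exp(i θ_k)`. -/
noncomputable def Dmat (n : ℕ) (θ : (Fin n → Bool) → ℝ) :
    Matrix (Fin n → Bool) (Fin n → Bool) ℂ :=
  Matrix.diagonal fun k => Complex.exp (Complex.I * Complex.ofReal (θ k))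

/-- The qubit numbered `v ∈ {1,…,n}`, as an element of `Fin n`. -/
def qb (n : ℕ) (hn : 0 < n) (v : ℕ) : Fin n :=
  if h : v - 1 < n then ⟨v - 1, h⟩ else ⟨0, hn⟩

/-- The reflected Gray code sequence of `m`-bit strings. -/
def gray : ℕ → List (List Bool)
  | 0 => [[]]
  | m + 1 =>
    (gray m).map (fun g => g ++ [false]) ++ (gray m).reverse.map (fun g => g ++ [true])

/-- `cc_set(p)`: the list of CNOT controls. -/
def ccSet : ℕ → List ℕ
  | 0 => []
  | 1 => []
  | 2 => [1, 1]
  | p + 3 =>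
    let l := (ccSet (p + 2)).set (2 ^ (p + 1) - 1) (p + 2)
    l ++ l

/-- The `n`-bit string whose first `p−1` bits are the `(p−1)`-bit string `g`, whose
`p`-th bit is `1`, and whose remaining `n−p` bits are `0`. -/
def jstr (n p : ℕ) (g : List Bool) : Fin n → Bool :=
  fun q => if (q : ℕ) < p - 1 then g.getD q false
    else if (q : ℕ) = p - 1 then true else false

/-- The matrix `G_p` (for `2 ≤ p ≤ n`) obtained by applying, in order,
`R_Z(−β_{j⁽¹⁾};p), CNOT(cc_set(p)(1),p), …, R_Z(−β_{j⁽ᵗ⁾};p), CNOT(cc_set(p)(t),p)`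
with `t = 2^{p−1}`, where `j⁽ⁱ⁾` is the `n`-bit string whose first `p−1` bits are
`GC_t(i)`, whose `p`-th bit is `1`, and whose remaining bits are `0`. -/
noncomputable def Gmat (n : ℕ) (hn : 0 < n) (p : ℕ) (β : (Fin n → Bool) → ℝ) :
    Matrix (Fin n → Bool) (Fin n → Bool) ℂ :=
  (List.range (2 ^ (p - 1))).foldl
    (fun M i =>
      CNOT n (qb n hn ((ccSet p).getD i 0)) (qb n hn p) *
        RZ n (β (jstr n p ((gray (p - 1)).getD i []))) (qb n hn p) * M)
    1


/-! ### Auxiliary development -/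

noncomputable def ssgn (b : Bool) : ℝ := if b then -1 else 1

lemma ssgn_xor (a b : Bool) : ssgn (xor a b) = ssgn a * ssgn b := by
  cases a <;> cases b <;> norm_num [ssgn]

lemma sgn_eq_prod (n : ℕ) (j k : Fin n → Bool) :
    sgn n j k = ∏ i : Fin n, ssgn (j i && k i) := by
  unfold sgn
  rw [← Finset.prod_const, Finset.prod_filter]
  exact Finset.prod_congr rfl fun i _ => by by_cases h : (j i && k i) = true <;> simp [h, ssgn]

lemma sum_sgn_orth (n : ℕ) (k l : Fin n → Bool) :
    ∑ J : Fin n → Bool, sgn n J k * sgn n J l = if k = l then (2:ℝ)^n else 0 := by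
  have h1 : ∀ J : Fin n → Bool, sgn n J k * sgn n J l
      = ∏ i, ssgn (J i && xor (k i) (l i)) := by
    intro J
    rw [sgn_eq_prod, sgn_eq_prod, ← Finset.prod_mul_distrib]
    refine Finset.prod_congr rfl fun i _ => ?_
    rw [← ssgn_xor]; congr 1; cases J i <;> cases k i <;> cases l i <;> rfl
  simp only [h1]
  have h2 : ∑ J : Fin n → Bool, ∏ i, ssgn (J i && xor (k i) (l i))
      = ∏ i : Fin n, ∑ b : Bool, ssgn (b && xor (k i) (l i)) := by
    rw [Finset.prod_univ_sum (fun _ => (Finset.univ : Finset Bool))]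
    rw [Fintype.piFinset_univ]
  rw [h2]
  have h3 : ∀ c : Bool, ∑ b : Bool, ssgn (b && c) = if c then 0 else 2 := by
    intro c; cases c <;> simp [ssgn, Fintype.sum_bool]
  simp only [h3]
  by_cases h : k = l
  · subst h
    simp [Finset.prod_const]
  · rw [if_neg h]
    obtain ⟨i, hi⟩ := Function.ne_iff.mp h
    refine Finset.prod_eq_zero (Finset.mem_univ i) ?_
    have : xor (k i) (l i) = true := by
      cases hk : k i <;> cases hl : l i <;> simp_all
    rw [this, if_pos rfl]

lemma walsh_inv (n : ℕ) (θ α : (Fin n → Bool) → ℝ)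
    (hα : ∀ j, α j = (1 / Real.sqrt 2) ^ n * ∑ k : Fin n → Bool, sgn n j k * θ k)
    (k : Fin n → Bool) :
    ∑ J : Fin n → Bool, sgn n J k * α J = Real.sqrt 2 ^ n * θ k := by
  have hpos : (0:ℝ) < Real.sqrt 2 := Real.sqrt_pos.mpr (by norm_num)
  have hss : Real.sqrt 2 * Real.sqrt 2 = 2 := Real.mul_self_sqrt (by norm_num)
  simp only [hα]
  calc ∑ J : Fin n → Bool, sgn n J k * ((1 / Real.sqrt 2) ^ n * ∑ l : Fin n → Bool, sgn n J l * θ l)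
      = ∑ J : Fin n → Bool, ∑ l : Fin n → Bool,
          (1 / Real.sqrt 2) ^ n * (sgn n J k * sgn n J l * θ l) := by
        refine Finset.sum_congr rfl fun J _ => ?_
        rw [Finset.mul_sum, Finset.mul_sum]
        exact Finset.sum_congr rfl fun l _ => by ring
    _ = ∑ l : Fin n → Bool, ∑ J : Fin n → Bool,
          (1 / Real.sqrt 2) ^ n * (sgn n J k * sgn n J l * θ l) := Finset.sum_comm
    _ = ∑ l : Fin n → Bool,
          (1 / Real.sqrt 2) ^ n * ((∑ J : Fin n → Bool, sgn n J k * sgn n J l) * θ l) := by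
        refine Finset.sum_congr rfl fun l _ => ?_
        rw [Finset.sum_mul, Finset.mul_sum]
    _ = Real.sqrt 2 ^ n * θ k := by
        simp only [sum_sgn_orth]
        rw [Finset.sum_eq_single k]
        · rw [if_pos rfl]
          rw [show (1 / Real.sqrt 2) ^ n * ((2:ℝ)^n * θ k) = ((1 / Real.sqrt 2) * 2) ^ n * θ k by
            rw [mul_pow]; ring]
          congr 2
          field_simp
          rw [Real.sq_sqrt (by norm_num : (0:ℝ) ≤ 2)]
        · intro l _ hl
          rw [if_neg (fun h => hl h.symm)]
          ring
        · intro h; exact absurd (Finset.mem_univ k) h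

/-! ### Boolean/list combinatorics -/

def dotB : List Bool → (ℕ → Bool) → Bool
  | [], _ => false
  | b :: g, k => xor (b && k 0) (dotB g fun i => k (i + 1))

lemma dotB_append (g : List Bool) (b : Bool) (k : ℕ → Bool) :
    dotB (g ++ [b]) k = xor (dotB g k) (b && k g.length) := by
  induction g generalizing k with
  | nil => simp [dotB]
  | cons a g ih =>
    rw [List.cons_append]
    show xor (a && k 0) (dotB (g ++ [b]) fun i => k (i + 1)) = _
    rw [ih, List.length_cons]
    show _ = xor (xor (a && k 0) (dotB g fun i => k (i + 1))) (b && k (g.length + 1))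
    rw [Bool.xor_assoc]

def xorP (l : List ℕ) (k : ℕ → Bool) : Bool :=
  l.foldr (fun c b => xor (k (c - 1)) b) false

lemma xorP_cons (a : ℕ) (l : List ℕ) (k : ℕ → Bool) :
    xorP (a :: l) k = xor (k (a - 1)) (xorP l k) := rfl

lemma xorP_append (l1 l2 : List ℕ) (k : ℕ → Bool) :
    xorP (l1 ++ l2) k = xor (xorP l1 k) (xorP l2 k) := by
  induction l1 with
  | nil => simp [xorP]
  | cons a l ih =>
    rw [List.cons_append, xorP_cons, xorP_cons, ih, Bool.xor_assoc]

def flipLast : List Bool → List Bool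
  | [] => []
  | [b] => [!b]
  | a :: b :: g => a :: flipLast (b :: g)

lemma flipLast_append (g : List Bool) (b : Bool) : flipLast (g ++ [b]) = g ++ [!b] := by
  induction g with
  | nil => rfl
  | cons a g ih =>
    cases g with
    | nil => rfl
    | cons c t =>
      rw [List.cons_append, show flipLast (a :: ((c :: t) ++ [b])) =
        a :: flipLast ((c :: t) ++ [b]) from rfl, ih]
      rfl

lemma length_flipLast (g : List Bool) : (flipLast g).length = g.length := by
  induction g with
  | nil => rfl
  | cons a g ih =>
    cases g with
    | nil => rfl
    | cons c t =>
      rw [show flipLast (a :: c :: t) = a :: flipLast (c :: t) from rfl]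
      simp only [List.length_cons, ih]

lemma gray_length (m : ℕ) : (gray m).length = 2 ^ m := by
  induction m with
  | zero => rfl
  | succ m ih => simp [gray, ih]; ring

lemma gray_mem_length {m : ℕ} : ∀ g ∈ gray m, g.length = m := by
  induction m with
  | zero => intro g hg; simp [gray] at hg; simp [hg]
  | succ m ih =>
    intro g hg
    simp only [gray, List.mem_append, List.mem_map, List.mem_reverse] at hg
    rcases hg with ⟨a, ha, rfl⟩ | ⟨a, ha, rfl⟩ <;>
      simp [ih a ha]

lemma gray_reverse (m : ℕ) : (gray (m+1)).reverse = (gray (m+1)).map flipLast := by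
  rw [show gray (m+1) = (gray m).map (fun g => g ++ [false]) ++
      (gray m).reverse.map (fun g => g ++ [true]) from rfl]
  simp only [List.reverse_append, List.map_reverse, List.reverse_reverse, List.map_append,
    List.map_map]
  congr 1
  · exact List.map_congr_left fun g _ => by
      rw [Function.comp_apply, flipLast_append]; rfl
  · congr 1
    exact List.map_congr_left fun g _ => by
      rw [Function.comp_apply, flipLast_append]; rfl

lemma gray_getD_zero (m : ℕ) : (gray m).getD 0 [] = List.replicate m false := by
  induction m with
  | zero => rfl
  | succ m ih =>
    have h2 : (1:ℕ) ≤ 2 ^ m := Nat.one_le_two_pow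
    have h0 : 0 < ((gray m).map (fun g => g ++ [false])).length := by
      rw [List.length_map, gray_length]; omega
    have h0' : 0 < (gray m).length := by rw [gray_length]; omega
    rw [show gray (m+1) = (gray m).map (fun g => g ++ [false]) ++ (gray m).reverse.map (fun g => g ++ [true]) from rfl]
    rw [List.getD_eq_getElem _ _ (by rw [List.length_append]; omega),
      List.getElem_append_left h0, List.getElem_map]
    rw [List.replicate_succ']
    congr 1
    rw [← ih, List.getD_eq_getElem _ _ h0']

lemma gray_getD_last (m : ℕ) :
    (gray (m+1)).getD (2^(m+1) - 1) [] = List.replicate m false ++ [true] := by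
  have hlen : (gray (m+1)).length = 2^(m+1) := gray_length _
  have h1 : 1 ≤ 2^(m+1) := Nat.one_le_two_pow
  have hlt : 2^(m+1) - 1 < (gray (m+1)).length := by omega
  rw [List.getD_eq_getElem _ _ hlt]
  have h2 : (gray (m+1)).reverse[0]'(by simpa using by omega) = (gray (m+1))[2^(m+1)-1]'hlt := by
    rw [List.getElem_reverse]
    congr 1
    omega
  rw [← h2]
  have h3 : (gray (m+1)).reverse[0]'(by simpa using by omega)
      = ((gray (m+1)).map flipLast)[0]'(by simpa using by omega) := by
    congr 1
    exact gray_reverse m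
  rw [h3, List.getElem_map]
  have h4 : (gray (m+1))[0]'(by omega) = List.replicate (m+1) false := by
    rw [← gray_getD_zero (m+1), List.getD_eq_getElem _ _ (by omega)]
  rw [h4, List.replicate_succ', flipLast_append]
  rfl

lemma dotB_replicate (m : ℕ) (k : ℕ → Bool) : dotB (List.replicate m false) k = false := by
  induction m generalizing k with
  | zero => rfl
  | succ m ih => simp [List.replicate_succ, dotB, ih]

lemma dotB_last_gray (m : ℕ) (k : ℕ → Bool) :
    dotB (List.replicate m false ++ [true]) k = k m := by
  rw [dotB_append, dotB_replicate]
  simp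

lemma dotB_flipLast (g : List Bool) (hg : g ≠ []) (k : ℕ → Bool) :
    dotB (flipLast g) k = xor (dotB g k) (k (g.length - 1)) := by
  obtain ⟨L, b, rfl⟩ := (List.eq_nil_or_concat g).resolve_left hg
  rw [List.concat_eq_append, flipLast_append, dotB_append, dotB_append]
  simp only [List.length_append, List.length_cons, List.length_nil]
  have : L.length + (0+1) - 1 = L.length := by omega
  rw [this]
  cases b <;> cases dotB L k <;> cases k L.length <;> rfl

lemma ccSet_length (m : ℕ) : (ccSet (m+2)).length = 2^(m+1) := by
  induction m with
  | zero => rfl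
  | succ m ih =>
    show ((ccSet (m+2)).set (2 ^ (m+1) - 1) (m+2) ++ (ccSet (m+2)).set (2 ^ (m+1) - 1) (m+2)).length = _
    rw [List.length_append, List.length_set, ih, pow_succ]
    ring

lemma ccSet_mem (m : ℕ) : ∀ x ∈ ccSet (m+2), 1 ≤ x ∧ x ≤ m + 1 := by
  induction m with
  | zero => intro x hx; simp [ccSet] at hx; omega
  | succ m ih =>
    intro x hx
    have hx' : x ∈ (ccSet (m+2)).set (2 ^ (m+1) - 1) (m+2) := by
      rw [show ccSet (m+3) = (ccSet (m+2)).set (2 ^ (m+1) - 1) (m+2) ++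
        (ccSet (m+2)).set (2 ^ (m+1) - 1) (m+2) from rfl] at hx
      rcases List.mem_append.mp hx with h | h <;> exact h
    rcases List.mem_or_eq_of_mem_set hx' with h | rfl
    · have := ih x h; omega
    · omega

lemma key (m : ℕ) : ∀ (k : ℕ → Bool) (i : ℕ), i ≤ 2^(m+1) →
    xorP ((ccSet (m+2)).take i) k =
      if i = 2^(m+1) then false else dotB ((gray (m+1)).getD i []) k := by
  induction m with
  | zero =>
    intro k i hi
    norm_num at hi
    interval_cases i <;> simp [ccSet, gray, xorP, dotB]
  | succ m ih =>
    intro k i hi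
    have h1 : (1:ℕ) ≤ 2^(m+1) := Nat.one_le_two_pow
    have hpow : (2:ℕ)^(m+2) = 2^(m+1) + 2^(m+1) := by rw [pow_succ]; ring
    have hccl : (ccSet (m+2)).length = 2^(m+1) := ccSet_length m
    have hgl : (gray (m+1)).length = 2^(m+1) := gray_length _
    set L : List ℕ := (ccSet (m+2)).set (2^(m+1) - 1) (m+2) with hLdef
    have hcc : ccSet (m+3) = L ++ L := rfl
    have hlenL : L.length = 2^(m+1) := by rw [hLdef, List.length_set, hccl]
    have hfull : xorP (ccSet (m+2)) k = false := by
      have h := ih k (2^(m+1)) le_rfl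
      rwa [if_pos rfl, List.take_of_length_le (le_of_eq hccl)] at h
    have hpen : xorP ((ccSet (m+2)).take (2^(m+1) - 1)) k = k m := by
      have h := ih k (2^(m+1) - 1) (by omega)
      rw [if_neg (by omega)] at h
      rw [h, gray_getD_last m, dotB_last_gray]
    have htake : ∀ r : ℕ, r < 2^(m+1) → L.take r = (ccSet (m+2)).take r := by
      intro r hr
      rw [hLdef, List.take_set]
      apply List.set_eq_of_length_le
      exact le_trans (List.length_take_le _ _) (by omega)
    have hXL : xorP L k = xor (k m) (k (m+1)) := by
      have hset : L = (ccSet (m+2)).take (2^(m+1) - 1) ++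
          (m+2) :: (ccSet (m+2)).drop (2^(m+1) - 1 + 1) := by
        rw [hLdef]; exact List.set_eq_take_cons_drop _ (by omega)
      have hdrop : (ccSet (m+2)).drop (2^(m+1) - 1 + 1) = [] := by
        apply List.drop_eq_nil_of_le
        omega
      rw [hset, hdrop, xorP_append, hpen, xorP_cons]
      norm_num [xorP]
    rcases lt_or_ge i (2^(m+1)) with hlt | hge
    · have htk : (ccSet (m+3)).take i = (ccSet (m+2)).take i := by
        rw [hcc, List.take_append_of_le_length (by omega), htake i hlt]
      rw [htk, ih k i (by omega), if_neg (by omega), if_neg (by omega)]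
      have hgetd : (gray (m+2)).getD i [] = (gray (m+1)).getD i [] ++ [false] := by
        rw [show gray (m+2) = (gray (m+1)).map (fun g => g ++ [false]) ++
          (gray (m+1)).reverse.map (fun g => g ++ [true]) from rfl]
        rw [List.getD_eq_getElem _ _ (by
            rw [List.length_append, List.length_map, List.length_map, List.length_reverse, hgl]
            omega),
          List.getElem_append_left (by rw [List.length_map, hgl]; omega), List.getElem_map,
          List.getD_eq_getElem _ _ (by omega)]
      rw [hgetd, dotB_append]
      simp
    · obtain ⟨r, rfl⟩ : ∃ r, i = 2^(m+1) + r := ⟨i - 2^(m+1), by omega⟩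
      have hr : r ≤ 2^(m+1) := by omega
      have htk2 : (ccSet (m+3)).take (2^(m+1) + r) = L ++ L.take r := by
        rw [hcc, ← hlenL, List.take_append, List.take_of_length_le (show L.length ≤ L.length + r by omega),
          Nat.add_sub_cancel_left]
      rw [htk2, xorP_append, hXL]
      rcases eq_or_lt_of_le hr with rfl | hrlt
      · rw [List.take_of_length_le (le_of_eq hlenL), hXL, if_pos (by omega)]
        cases k m <;> cases k (m+1) <;> rfl
      · rw [htake r hrlt, ih k r (by omega), if_neg (by omega), if_neg (by omega)]
        set g : List Bool := (gray (m+1)).getD r [] with hgdef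
        have hgmem : g ∈ gray (m+1) := by
          rw [hgdef, List.getD_eq_getElem _ _ (by omega)]
          exact List.getElem_mem _
        have hglen : g.length = m + 1 := gray_mem_length g hgmem
        have hgetd : (gray (m+2)).getD (2^(m+1)+r) [] = flipLast g ++ [true] := by
          rw [show gray (m+2) = (gray (m+1)).map (fun g => g ++ [false]) ++
            (gray (m+1)).reverse.map (fun g => g ++ [true]) from rfl]
          rw [List.getD_eq_getElem _ _ (by
            rw [List.length_append, List.length_map, List.length_map, List.length_reverse, hgl]
            omega)]
          rw [List.getElem_append_right (by rw [List.length_map, hgl]; omega)]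
          rw [List.getElem_map]
          congr 1
          have hidx : 2^(m+1) + r - ((gray (m+1)).map (fun g => g ++ [false])).length = r := by
            rw [List.length_map, hgl]; omega
          rw [getElem_congr_idx hidx, List.getElem_of_eq (gray_reverse m), List.getElem_map]
          congr 1
          rw [hgdef, List.getD_eq_getElem _ _ (by omega)]
        have hgne : g ≠ [] := by
          intro h
          rw [h] at hglen
          simp at hglen
        rw [hgetd, dotB_append, dotB_flipLast g hgne k, length_flipLast, hglen]
        have : m + 1 - 1 = m := rfl
        rw [this]
        cases dotB g k <;> cases k m <;> cases k (m+1) <;> rfl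

/-! ### Matrix computation -/

def parF (n : ℕ) (c : ℕ → Fin n) (k : Fin n → Bool) : ℕ → Bool
  | 0 => false
  | N+1 => xor (parF n c k N) (k (c N))

lemma upd_invol {n : ℕ} (t cc : Fin n) (hct : cc ≠ t) :
    Function.Involutive (fun j : Fin n → Bool =>
      Function.update j t (xor (j t) (j cc))) := by
  intro j
  simp only [Function.update_idem, Function.update_self, Function.update_of_ne hct]
  rw [Bool.xor_assoc, Bool.xor_self, Bool.xor_false, Function.update_eq_self]

lemma foldl_cnot_rz (n : ℕ) (t : Fin n) (c : ℕ → Fin n) (hct : ∀ i, c i ≠ t)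
    (b : ℕ → ℝ) (N : ℕ) :
    (List.range N).foldl (fun M i => CNOT n (c i) t * RZ n (b i) t * M) 1 =
    Matrix.of (fun k' k : Fin n → Bool =>
      if k' = Function.update k t (xor (k t) (parF n c k N)) then
        Complex.exp (Complex.I * Complex.ofReal
          (∑ i ∈ Finset.range N, b i * ssgn (xor (k t) (parF n c k i)) / 2))
      else 0) := by
  induction N with
  | zero =>
    ext k' k
    simp only [List.range_zero, List.foldl_nil, Matrix.of_apply, parF, Bool.xor_false,
      Function.update_eq_self, Finset.range_zero, Finset.sum_empty, Complex.ofReal_zero,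
      mul_zero, Complex.exp_zero]
    rw [Matrix.one_apply]
  | succ N ih =>
    rw [List.range_succ, List.foldl_append, List.foldl_cons, List.foldl_nil, ih]
    ext k' k
    set F : (Fin n → Bool) → (Fin n → Bool) :=
      fun j => Function.update j t (xor (j t) (j (c N))) with hF
    have hFinv : Function.Involutive F := upd_invol t (c N) (hct N)
    have hstep : ∀ k : Fin n → Bool,
        F (Function.update k t (xor (k t) (parF n c k N)))
          = Function.update k t (xor (k t) (parF n c k (N+1))) := by
      intro k
      simp only [hF, Function.update_idem, Function.update_self,
        Function.update_of_ne (hct N)]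
      have hb : ((k t).xor (parF n c k N)).xor (k (c N))
          = (k t).xor (parF n c k (N+1)) := by
        rw [Bool.xor_assoc]
        rfl
      rw [hb]
    have hC : ∀ j, CNOT n (c N) t k' j = if j = F k' then (1:ℂ) else 0 := by
      intro j
      show (if k' = F j then (1:ℂ) else 0) = _
      by_cases h : j = F k'
      · rw [if_pos h, if_pos]
        rw [h, hFinv k']
      · rw [if_neg h, if_neg]
        intro hh
        exact h (by rw [hh, hFinv j])
    rw [Matrix.mul_assoc, Matrix.mul_apply]
    simp only [hC, ite_mul, one_mul, zero_mul, Finset.sum_ite_eq', Finset.mem_univ, if_true]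
    simp only [RZ, Matrix.diagonal_mul, Matrix.of_apply]
    by_cases hk : k' = Function.update k t (xor (k t) (parF n c k (N+1)))
    · rw [if_pos hk]
      have hFk' : F k' = Function.update k t (xor (k t) (parF n c k N)) := by
        rw [hk, ← hstep k, hFinv]
      rw [hFk', if_pos rfl, Function.update_self, ← Complex.exp_add]
      congr 1
      rw [Finset.sum_range_succ]
      simp only [ssgn]
      push_cast
      ring
    · have hne : F k' ≠ Function.update k t (xor (k t) (parF n c k N)) := by
        intro h
        exact hk (by rw [← hstep k, ← h, hFinv k'])
      rw [if_neg hk, if_neg hne, mul_zero]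

/-! ### Sum over Gray code = sum over bit strings -/

lemma ofFn_snoc {m : ℕ} (j : Fin m → Bool) (b : Bool) :
    List.ofFn (Fin.snoc j b : Fin (m+1) → Bool) = List.ofFn j ++ [b] := by
  rw [List.ofFn_succ', List.concat_eq_append]
  simp

lemma list_sum_getD {M : Type*} [AddCommMonoid M] (l : List (List Bool)) (F : List Bool → M) :
    ∑ r ∈ Finset.range l.length, F (l.getD r []) = (l.map F).sum := by
  induction l with
  | nil => simp
  | cons a l ih =>
    rw [List.length_cons, Finset.sum_range_succ', List.map_cons, List.sum_cons]
    simp only [List.getD_cons_succ, List.getD_cons_zero]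
    rw [ih]
    exact add_comm _ _

lemma gray_sum {M : Type*} [AddCommMonoid M] (m : ℕ) :
    ∀ F : List Bool → M, ((gray m).map F).sum = ∑ j : Fin m → Bool, F (List.ofFn j) := by
  induction m with
  | zero =>
    intro F
    rw [show gray 0 = [[]] from rfl]
    rw [Fintype.sum_unique]
    simp
  | succ m ih =>
    intro F
    rw [show gray (m+1) = (gray m).map (fun g => g ++ [false]) ++
      (gray m).reverse.map (fun g => g ++ [true]) from rfl]
    rw [List.map_append, List.sum_append, List.map_map, List.map_map,
      List.map_reverse, List.sum_reverse, ih, ih]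
    rw [← Equiv.sum_comp (Fin.snocEquiv (fun _ => Bool)) (fun j => F (List.ofFn j)),
      Fintype.sum_prod_type, Fintype.sum_bool]
    have h1 : ∀ (b : Bool), ∑ j : Fin m → Bool,
        F (List.ofFn ((Fin.snocEquiv (fun _ => Bool)) (b, j)))
        = ∑ j : Fin m → Bool, F (List.ofFn j ++ [b]) := by
      intro b
      refine Finset.sum_congr rfl fun j _ => ?_
      congr 1
      rw [show (Fin.snocEquiv (fun _ => Bool)) (b, j) = Fin.snoc j b from rfl]
      exact ofFn_snoc j b
    rw [h1 true, h1 false]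
    exact add_comm _ _

lemma ssgn_dotB (m : ℕ) (j : Fin m → Bool) (k : ℕ → Bool) :
    ssgn (dotB (List.ofFn j) k) = ∏ i : Fin m, ssgn (j i && k i) := by
  induction m with
  | zero =>
    rw [List.ofFn_zero]
    simp [dotB, ssgn]
  | succ m ih =>
    have h := ofFn_snoc (Fin.init j) (j (Fin.last m))
    rw [Fin.snoc_init_self] at h
    rw [h, dotB_append, ssgn_xor, ih (Fin.init j), Fin.prod_univ_castSucc, List.length_ofFn]
    rfl

/-! ### Gmat is diagonal -/

def kfn (n : ℕ) (k : Fin n → Bool) (m : ℕ) : Bool := if h : m < n then k ⟨m, h⟩ else false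

lemma parF_eq_xorP (n : ℕ) (hn0 : 0 < n) (k : Fin n → Bool) (l : List ℕ)
    (hl : ∀ x ∈ l, x - 1 < n) :
    ∀ i, i ≤ l.length →
      parF n (fun m => qb n hn0 (l.getD m 0)) k i = xorP (l.take i) (kfn n k) := by
  intro i
  induction i with
  | zero => intro _; rfl
  | succ i ih =>
    intro hi
    have hi' : i < l.length := by omega
    rw [show parF n (fun m => qb n hn0 (l.getD m 0)) k (i+1)
      = xor (parF n (fun m => qb n hn0 (l.getD m 0)) k i) (k (qb n hn0 (l.getD i 0))) from rfl]
    rw [ih (by omega), List.take_succ, List.getElem?_eq_getElem hi', xorP_append]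
    have hx : l.getD i 0 = l[i] := List.getD_eq_getElem l 0 hi'
    rw [hx]
    congr 1
    have hb : l[i] - 1 < n := hl _ (List.getElem_mem _)
    show k (qb n hn0 l[i]) = xorP [l[i]] (kfn n k)
    rw [show xorP [l[i]] (kfn n k) = xor (kfn n k (l[i] - 1)) false from rfl, Bool.xor_false]
    unfold qb kfn
    rw [dif_pos hb, dif_pos hb]

lemma Gmat_eq (n : ℕ) (hn0 : 0 < n) (p : ℕ) (hp2 : 2 ≤ p) (hpn : p ≤ n)
    (β : (Fin n → Bool) → ℝ) :
    Gmat n hn0 p β = Matrix.diagonal (fun k => Complex.exp (Complex.I * Complex.ofReal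
      (∑ i ∈ Finset.range (2^(p-1)),
        β (jstr n p ((gray (p-1)).getD i [])) *
          ssgn (xor (k (qb n hn0 p)) (dotB ((gray (p-1)).getD i []) (kfn n k))) / 2))) := by
  obtain ⟨m, rfl⟩ : ∃ m, p = m + 2 := ⟨p - 2, by omega⟩
  have hmn : m + 2 ≤ n := hpn
  have hccl := ccSet_length m
  have hcmem := ccSet_mem m
  have hct : ∀ i : ℕ, qb n hn0 ((ccSet (m+2)).getD i 0) ≠ qb n hn0 (m+2) := by
    intro i
    have h2 : qb n hn0 (m+2) = ⟨m+1, by omega⟩ := by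
      unfold qb; rw [dif_pos (show m+2-1 < n by omega)]; rfl
    rw [h2]
    by_cases hi : i < (ccSet (m+2)).length
    · have hmem : (ccSet (m+2)).getD i 0 ∈ ccSet (m+2) := by
        rw [List.getD_eq_getElem _ _ hi]; exact List.getElem_mem _
      have hb := hcmem _ hmem
      unfold qb
      rw [dif_pos (show (ccSet (m+2)).getD i 0 - 1 < n by omega)]
      intro h
      have := congrArg Fin.val h
      simp only [Fin.val_mk] at this
      omega
    · rw [List.getD_eq_default _ _ (by omega)]
      unfold qb
      rw [dif_pos (show 0-1 < n by omega)]
      intro h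
      have := congrArg Fin.val h
      simp only [Fin.val_mk] at this
      omega
  have h := foldl_cnot_rz n (qb n hn0 (m+2)) (fun i => qb n hn0 ((ccSet (m+2)).getD i 0)) hct
      (fun i => β (jstr n (m+2) ((gray (m+2-1)).getD i []))) (2^(m+2-1))
  have hG : Gmat n hn0 (m+2) β = _ := h
  rw [hG]
  have hpar : ∀ (k : Fin n → Bool) (i : ℕ), i ≤ 2^(m+1) →
      parF n (fun i => qb n hn0 ((ccSet (m+2)).getD i 0)) k i
        = xorP ((ccSet (m+2)).take i) (kfn n k) := by
    intro k i hi
    exact parF_eq_xorP n hn0 k (ccSet (m+2))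
      (fun x hx => by have := hcmem x hx; omega) i (by omega)
  ext k' k
  have hfull : parF n (fun i => qb n hn0 ((ccSet (m+2)).getD i 0)) k (2^(m+1)) = false := by
    rw [hpar k _ le_rfl]
    have hk := key m (kfn n k) (2^(m+1)) le_rfl
    rwa [if_pos rfl] at hk
  rw [Matrix.of_apply, Matrix.diagonal_apply]
  simp only [show m+2-1 = m+1 from rfl]
  rw [hfull, Bool.xor_false, Function.update_eq_self]
  by_cases hkk : k' = k
  · subst hkk
    rw [if_pos rfl, if_pos rfl]
    congr 2
    refine congrArg Complex.ofReal (Finset.sum_congr rfl fun i hi => ?_)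
    have hi' : i < 2^(m+1) := Finset.mem_range.mp hi
    rw [hpar k' i (by omega)]
    have hk := key m (kfn n k') i (by omega)
    rw [if_neg (by omega)] at hk
    rw [hk]
  · rw [if_neg hkk, if_neg hkk]

/-! ### Products of diagonal matrices -/

lemma prod_diag {I : Type*} [Fintype I] [DecidableEq I] (l : List (I → ℂ)) :
    (l.map Matrix.diagonal).prod
      = Matrix.diagonal (fun k => (l.map (fun d => d k)).prod) := by
  induction l with
  | nil => simp
  | cons d l ih =>
    rw [List.map_cons, List.prod_cons, ih, Matrix.diagonal_mul_diagonal]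
    rfl

lemma list_prod_range {M : Type*} [CommMonoid M] (f : ℕ → M) (m : ℕ) :
    ((List.range m).map f).prod = ∏ i ∈ Finset.range m, f i := by
  induction m with
  | zero => simp
  | succ m ih =>
    rw [List.range_succ, List.map_append, List.prod_append, Finset.prod_range_succ, ih]
    simp

/-! ### sgn of special strings -/

lemma sgn_J1 (n : ℕ) (hn0 : 0 < n) (k : Fin n → Bool) :
    sgn n (fun q : Fin n => decide ((q:ℕ) = 0)) k = ssgn (k (qb n hn0 1)) := by
  have hq : qb n hn0 1 = ⟨0, hn0⟩ := by
    unfold qb; rw [dif_pos (show 1-1 < n from hn0)]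
  rw [sgn_eq_prod, Finset.prod_eq_single (qb n hn0 1)]
  · rw [hq]
    norm_num
  · intro b _ hb
    have hbv : (b:ℕ) ≠ 0 := by
      intro h
      exact hb (by rw [hq]; exact Fin.ext h)
    simp [hbv, ssgn]
  · intro h; exact absurd (Finset.mem_univ _) h

lemma sgn_jstr (n : ℕ) (hn0 : 0 < n) (p : ℕ) (hp1 : 1 ≤ p) (hpn : p ≤ n)
    (g : List Bool) (k : Fin n → Bool) :
    sgn n (jstr n p g) k
      = ssgn (k (qb n hn0 p)) *
        ∏ i ∈ Finset.range (p-1), ssgn (g.getD i false && kfn n k i) := by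
  obtain ⟨p', rfl⟩ : ∃ p', p = p' + 1 := ⟨p - 1, by omega⟩
  simp only [Nat.add_sub_cancel]
  rw [sgn_eq_prod]
  have hkfn : ∀ (f : Fin n → Bool) (q : Fin n), kfn n f (q:ℕ) = f q := by
    intro f q
    unfold kfn
    rw [dif_pos q.isLt]
  have h1 : ∏ q : Fin n, ssgn (jstr n (p'+1) g q && k q)
      = ∏ r ∈ Finset.range n, ssgn (kfn n (jstr n (p'+1) g) r && kfn n k r) := by
    rw [← Fin.prod_univ_eq_prod_range (fun r => ssgn (kfn n (jstr n (p'+1) g) r && kfn n k r)) n]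
    refine Finset.prod_congr rfl fun q _ => ?_
    rw [hkfn, hkfn]
  rw [h1, ← Finset.prod_range_mul_prod_Ico _ (show p'+1 ≤ n from hpn)]
  have h2 : ∏ r ∈ Finset.Ico (p'+1) n, ssgn (kfn n (jstr n (p'+1) g) r && kfn n k r) = 1 := by
    apply Finset.prod_eq_one
    intro r hr
    obtain ⟨hr1, hr2⟩ := Finset.mem_Ico.mp hr
    have hz : kfn n (jstr n (p'+1) g) r = false := by
      unfold kfn
      rw [dif_pos hr2]
      unfold jstr
      rw [if_neg (show ¬(r < p'+1-1) by omega), if_neg (show ¬(r = p'+1-1) by omega)]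
    rw [hz]
    simp [ssgn]
  rw [h2, mul_one, Finset.prod_range_succ]
  have h3 : ssgn (kfn n (jstr n (p'+1) g) p' && kfn n k p') = ssgn (k (qb n hn0 (p'+1))) := by
    have hq : qb n hn0 (p'+1) = ⟨p', by omega⟩ := by
      unfold qb; rw [dif_pos (show p'+1-1 < n by omega)]; rfl
    have hj : kfn n (jstr n (p'+1) g) p' = true := by
      unfold kfn
      rw [dif_pos (show p' < n by omega)]
      unfold jstr
      rw [if_neg (show ¬(p' < p'+1-1) by omega), if_pos (show p' = p'+1-1 by omega)]
    rw [hj, Bool.true_and, hq]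
    unfold kfn
    rw [dif_pos (show p' < n by omega)]
  rw [h3, mul_comm]
  congr 1
  refine Finset.prod_congr rfl fun r hr => ?_
  have hrlt : r < p' := Finset.mem_range.mp hr
  have hjr : kfn n (jstr n (p'+1) g) r = g.getD r false := by
    unfold kfn
    rw [dif_pos (show r < n by omega)]
    unfold jstr
    rw [if_pos (show r < p'+1-1 by omega)]
  rw [hjr]

/-! ### Reindexing the double sum -/

def Tset (n m : ℕ) : Finset (Fin n → Bool) :=
  Finset.univ.filter (fun J => ∀ q : Fin n, m ≤ (q:ℕ) → J q = false)

lemma sum_reindex (n : ℕ) (hn0 : 0 < n) (F : (Fin n → Bool) → ℝ) :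
    ∀ m : ℕ, m + 1 ≤ n →
    ∑ J ∈ Tset n (m+1), F J =
      F (fun _ => false) + F (fun q => decide ((q:ℕ) = 0)) +
        ∑ i ∈ Finset.range m, ∑ j : Fin (i+1) → Bool, F (jstr n (i+2) (List.ofFn j)) := by
  intro m
  induction m with
  | zero =>
    intro h1
    rw [Finset.sum_range_zero, add_zero]
    have hT : Tset n 1 = {fun _ => false, fun q : Fin n => decide ((q:ℕ) = 0)} := by
      ext J
      simp only [Tset, Finset.mem_filter, Finset.mem_univ, true_and, Finset.mem_insert,
        Finset.mem_singleton]
      constructor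
      · intro hJ
        by_cases h0 : J ⟨0, hn0⟩ = true
        · right
          funext q
          by_cases hq : (q:ℕ) = 0
          · have hq' : q = ⟨0, hn0⟩ := Fin.ext hq
            rw [hq', h0]
            simp [hq]
          · rw [hJ q (by omega)]
            simp [hq]
        · left
          funext q
          by_cases hq : (q:ℕ) = 0
          · have hq' : q = ⟨0, hn0⟩ := Fin.ext hq
            rw [hq']
            exact Bool.not_eq_true _ ▸ (Bool.eq_false_iff.mpr (fun hh => h0 hh))
          · exact hJ q (by omega)
      · intro hJ q hq
        have hq0 : (q:ℕ) ≠ 0 := by omega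
        rcases hJ with rfl | rfl
        · rfl
        · simp [hq0]
    rw [hT, Finset.sum_insert, Finset.sum_singleton]
    simp only [Finset.mem_singleton]
    intro h
    have h0 := congrFun h ⟨0, hn0⟩
    simp at h0
  | succ m ih =>
    intro hmn
    have hm1 : m + 1 ≤ n := by omega
    have hsub : Tset n (m+1) ⊆ Tset n (m+2) := by
      intro J hJ
      simp only [Tset, Finset.mem_filter, Finset.mem_univ, true_and] at *
      intro q hq
      exact hJ q (by omega)
    rw [Finset.sum_range_succ, ← Finset.sum_sdiff hsub, ih hm1]
    have hdiff : ∑ J ∈ Tset n (m+2) \ Tset n (m+1), F J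
        = ∑ j : Fin (m+1) → Bool, F (jstr n (m+2) (List.ofFn j)) := by
      symm
      refine Finset.sum_nbij' (fun j => jstr n (m+2) (List.ofFn j))
        (fun J => fun i : Fin (m+1) => J ⟨(i:ℕ), lt_of_lt_of_le i.isLt hm1⟩) ?_ ?_ ?_ ?_ ?_
      · intro j _
        simp only [Finset.mem_sdiff, Tset, Finset.mem_filter, Finset.mem_univ, true_and]
        constructor
        · intro q hq
          simp only [jstr]
          rw [if_neg (by omega), if_neg (by omega)]
        · intro hall
          have hthis := hall ⟨m+1, by omega⟩ (le_refl (m+1))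
          simp only [jstr, Fin.val_mk] at hthis
          rw [if_neg (by omega), if_pos (by omega)] at hthis
          exact Bool.true_eq_false ▸ hthis
      · intro J _
        exact Finset.mem_univ _
      · intro j _
        funext i
        have hilt := i.isLt
        have hco : ((⟨(i:ℕ), lt_of_lt_of_le i.isLt hm1⟩ : Fin n) : ℕ) = (i:ℕ) := rfl
        simp only [jstr, hco]
        rw [if_pos (show (i:ℕ) < m+2-1 by omega)]
        rw [List.getD_eq_getElem _ _ (by rw [List.length_ofFn]; omega), List.getElem_ofFn]
      · intro J hJ
        simp only [Finset.mem_sdiff, Tset, Finset.mem_filter, Finset.mem_univ, true_and] at hJ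
        obtain ⟨hJ2, hJ1⟩ := hJ
        push_neg at hJ1
        obtain ⟨q', hq1', hq2'⟩ := hJ1
        have hq'val : (q' : ℕ) = m + 1 := by
          by_contra hne
          have : m + 2 ≤ (q' : ℕ) := by omega
          exact hq2' (hJ2 q' this)
        have hq'true : J q' = true := by
          cases hJq : J q'
          · exact absurd hJq hq2'
          · rfl
        funext q
        simp only [jstr]
        by_cases hlt : (q:ℕ) < m+2-1
        · rw [if_pos hlt]
          rw [List.getD_eq_getElem _ _ (by rw [List.length_ofFn]; omega), List.getElem_ofFn]
        · by_cases heq : (q:ℕ) = m+2-1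
          · rw [if_neg hlt, if_pos heq]
            have hqq' : q = q' := Fin.ext (by omega)
            rw [hqq', hq'true]
          · rw [if_neg hlt, if_neg heq]
            exact (hJ2 q (by omega)).symm
      · intro j _
        rfl
    rw [hdiff]
    ring

/-- Theorem 1, correctness of the gate-count optimal construction:
with `G_1 = R_Z(−β_{10^{(n−1)}}; 1)` and `G_2, …, G_n` as above, the product
`G_1 · G_2 ⋯ G_n` equals `e^{−i θ̄} · D(θ)`, where `θ̄ = 2^{−n} Σ_k θ_k`. -/
theorem stmt16 (n : ℕ) (hn : 2 ≤ n) (hn0 : 0 < n)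
    (θ : (Fin n → Bool) → ℝ) (α : (Fin n → Bool) → ℝ)
    (hα : ∀ j, α j = (1 / Real.sqrt 2) ^ n * ∑ k : Fin n → Bool, sgn n j k * θ k)
    (β : (Fin n → Bool) → ℝ)
    (hβ : ∀ j, β j = α j / Real.sqrt 2 ^ ((n : ℤ) - 2)) :
    (RZ n (β fun q : Fin n => decide ((q : ℕ) = 0)) (qb n hn0 1) ::
        (List.range (n - 1)).map fun i => Gmat n hn0 (i + 2) β).prod =
      Complex.exp (-Complex.I *
          Complex.ofReal (((2 : ℝ) ^ n)⁻¹ * ∑ k : Fin n → Bool, θ k)) •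
        Dmat n θ := by
  have hs2 : Real.sqrt 2 * Real.sqrt 2 = 2 := Real.mul_self_sqrt (by norm_num)
  have hspos : (0:ℝ) < Real.sqrt 2 := Real.sqrt_pos.mpr (by norm_num)
  obtain ⟨n2, hn2⟩ : ∃ m, n = m + 2 := ⟨n - 2, by omega⟩
  have hβ' : ∀ J, β J = α J / Real.sqrt 2 ^ n2 := by
    intro J
    rw [hβ J]
    congr 1
    rw [show ((n:ℤ) - 2) = (n2:ℤ) by rw [hn2]; push_cast; ring]
    exact zpow_natCast _ n2
  have hpow2 : Real.sqrt 2 ^ n = Real.sqrt 2 ^ n2 * 2 := by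
    rw [hn2, pow_succ, pow_succ, mul_assoc, hs2]
  have hpown : Real.sqrt 2 ^ n * Real.sqrt 2 ^ n = 2 ^ n := by
    rw [← mul_pow, hs2]
  have hlist : ((RZ n (β fun q : Fin n => decide ((q : ℕ) = 0)) (qb n hn0 1)) ::
      (List.range (n - 1)).map fun i => Gmat n hn0 (i + 2) β)
      = ((fun k : Fin n → Bool => Complex.exp (Complex.I * Complex.ofReal
            ((β fun q : Fin n => decide ((q : ℕ) = 0)) * ssgn (k (qb n hn0 1)) / 2))) ::
         (List.range (n - 1)).map (fun i => fun k : Fin n → Bool =>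
            Complex.exp (Complex.I * Complex.ofReal
              (∑ r ∈ Finset.range (2^(i+2-1)),
                β (jstr n (i+2) ((gray (i+2-1)).getD r [])) *
                  ssgn (xor (k (qb n hn0 (i+2)))
                    (dotB ((gray (i+2-1)).getD r []) (kfn n k))) / 2)))).map
        Matrix.diagonal := by
    rw [List.map_cons, List.map_map]
    refine congrArg₂ List.cons rfl ?_
    refine List.map_congr_left fun i hi => ?_
    have hi' : i < n - 1 := List.mem_range.mp hi
    exact Gmat_eq n hn0 (i+2) (by omega) (by omega) β
  rw [hlist, prod_diag]
  rw [show Dmat n θ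
    = Matrix.diagonal (fun k => Complex.exp (Complex.I * Complex.ofReal (θ k))) from rfl]
  ext k' k
  rw [Matrix.diagonal_apply, Matrix.smul_apply, Matrix.diagonal_apply]
  by_cases hkk : k' = k
  · subst hkk
    rw [if_pos rfl, if_pos rfl, smul_eq_mul]
    rw [List.map_cons, List.map_map, List.prod_cons, list_prod_range]
    simp only [Function.comp_apply]
    rw [← Complex.exp_sum, ← Complex.exp_add, ← Complex.exp_add]
    congr 1
    rw [← Finset.mul_sum, ← Complex.ofReal_sum, ← mul_add, ← Complex.ofReal_add]
    have hterm2 : ∀ i ∈ Finset.range (n-1),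
        (∑ r ∈ Finset.range (2^(i+2-1)), β (jstr n (i+2) ((gray (i+2-1)).getD r [])) *
          ssgn (xor (k' (qb n hn0 (i+2))) (dotB ((gray (i+2-1)).getD r []) (kfn n k'))) / 2)
        = ∑ j : Fin (i+1) → Bool,
            β (jstr n (i+2) (List.ofFn j)) * sgn n (jstr n (i+2) (List.ofFn j)) k' / 2 := by
      intro i hi
      have hi' : i < n - 1 := Finset.mem_range.mp hi
      have hlen : (2:ℕ)^(i+2-1) = (gray (i+2-1)).length := (gray_length _).symm
      rw [hlen, list_sum_getD (gray (i+2-1)) (fun g => β (jstr n (i+2) g) *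
        ssgn (xor (k' (qb n hn0 (i+2))) (dotB g (kfn n k'))) / 2)]
      rw [show i+2-1 = i+1 from rfl]
      rw [gray_sum (i+1)]
      refine Finset.sum_congr rfl fun j _ => ?_
      rw [ssgn_xor, sgn_jstr n hn0 (i+2) (by omega) (by omega) (List.ofFn j) k']
      rw [show i+2-1 = i+1 from rfl]
      have hprod : ∏ r ∈ Finset.range (i+1), ssgn ((List.ofFn j).getD r false && kfn n k' r)
          = ssgn (dotB (List.ofFn j) (kfn n k')) := by
        rw [ssgn_dotB (i+1) j (kfn n k')]
        rw [← Fin.prod_univ_eq_prod_range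
          (fun r => ssgn ((List.ofFn j).getD r false && kfn n k' r)) (i+1)]
        refine Finset.prod_congr rfl fun x _ => ?_
        congr 2
        rw [List.getD_eq_getElem _ _ (by rw [List.length_ofFn]; exact x.isLt),
          List.getElem_ofFn]
      rw [hprod]
    have hkey : (β fun q : Fin n => decide ((q : ℕ) = 0)) * ssgn (k' (qb n hn0 1)) / 2
        + ∑ i ∈ Finset.range (n-1), ∑ r ∈ Finset.range (2^(i+2-1)),
            β (jstr n (i+2) ((gray (i+2-1)).getD r [])) *
              ssgn (xor (k' (qb n hn0 (i+2)))
                (dotB ((gray (i+2-1)).getD r []) (kfn n k'))) / 2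
        = θ k' - ((2:ℝ)^n)⁻¹ * ∑ l : Fin n → Bool, θ l := by
      rw [Finset.sum_congr rfl hterm2]
      have hr := sum_reindex n hn0 (fun J => β J * sgn n J k' / 2) (n-1) (by omega)
      have hT : Tset n ((n-1)+1) = Finset.univ := by
        rw [show n-1+1 = n by omega]
        unfold Tset
        apply Finset.filter_true_of_mem
        intro J _ q hq
        exact absurd q.isLt (by omega)
      rw [hT] at hr
      beta_reduce at hr
      have hsum_all : ∑ J : Fin n → Bool, β J * sgn n J k' / 2 = θ k' := by
        have h1 : ∀ J : Fin n → Bool, β J * sgn n J k' / 2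
            = (sgn n J k' * α J) / (Real.sqrt 2 ^ n2 * 2) := by
          intro J; rw [hβ' J]; ring
        simp only [h1]
        rw [← Finset.sum_div, walsh_inv n θ α hα k', hpow2]
        have hne : Real.sqrt 2 ^ n2 * 2 ≠ 0 := by positivity
        field_simp
      have hsgnZ : ∀ l : Fin n → Bool, sgn n (fun _ : Fin n => false) l = 1 := by
        intro l
        rw [sgn_eq_prod]
        apply Finset.prod_eq_one
        intro i _
        simp [ssgn]
      have hJ1sgn : sgn n (fun q : Fin n => decide ((q:ℕ) = 0)) k' = ssgn (k' (qb n hn0 1)) :=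
        sgn_J1 n hn0 k'
      have hFZ : β (fun _ : Fin n => false) * sgn n (fun _ : Fin n => false) k' / 2
          = ((2:ℝ)^n)⁻¹ * ∑ l : Fin n → Bool, θ l := by
        rw [hsgnZ, mul_one, hβ', hα]
        have hsum1 : ∑ l : Fin n → Bool, sgn n (fun _ : Fin n => false) l * θ l
            = ∑ l : Fin n → Bool, θ l := by
          refine Finset.sum_congr rfl fun l _ => ?_
          rw [hsgnZ, one_mul]
        rw [hsum1]
        set S : ℝ := ∑ l : Fin n → Bool, θ l with hS
        rw [one_div, inv_pow, div_div, ← hpow2]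
        rw [show (Real.sqrt 2 ^ n)⁻¹ * S / Real.sqrt 2 ^ n
          = S / (Real.sqrt 2 ^ n * Real.sqrt 2 ^ n) by ring, hpown, inv_mul_eq_div]
      rw [← hJ1sgn]
      linarith [hr, hsum_all, hFZ]
    rw [hkey]
    push_cast
    ring
  · rw [if_neg hkk, if_neg hkk, smul_zero]
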